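/- Let K be a field of characteristic 0 and L ⊇ K an algebraically closed field. Let V and W be K-vector spaces and F : V ⊗_K L → W ⊗_K L an L-linear map that commutes with the natural semilinear actions of Aut_K(L) on V ⊗_K L and W ⊗_K L (i.e. F ∘ (id_V ⊗ σ) = (id_W ⊗ σ) ∘ F for every σ ∈ Aut_K(L)). Then there is a unique K-linear map f : V → W with F = f ⊗_K id_L. -/

import Mathlib

/-!
An `Aut_K(L)`-invariant vector of `L ⊗[K] W` has invariant coordinates in a `K`-basis of `W`;
since the fixed field of `Aut_K(L)` is `K`, such a vector lies in `1 ⊗ W`. Hence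
`F (1 ⊗ v) = 1 ⊗ f v` defines `f`, and `f` is unique because `W → L ⊗[K] W` is injective.

The fixed field is `K`: a transcendental `x` is moved by translating it inside a transcendence
basis of `L`, and an algebraic `x ∉ K` has a different conjugate (`K` is perfect), reached by an
automorphism of the algebraic closure of `K` in `L`. Both automorphisms are first defined on a
polynomial ring over a transcendence basis and then extended to its algebraic closure `L`.
-/

open TensorProduct MvPolynomial

namespace MvPolynomial

variable {R ι : Type*} [CommRing R]

noncomputable def translate (c : ι → R) : MvPolynomial ι R ≃ₐ[R] MvPolynomial ι R :=
  AlgEquiv.ofAlgHom (aeval fun i => X i + C (c i)) (aeval fun i => X i - C (c i))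
    (by ext; simp) (by ext; simp)

@[simp]
theorem translate_X (c : ι → R) (i : ι) : translate c (X i) = X i + C (c i) :=
  aeval_X _ i

end MvPolynomial

namespace IsTranscendenceBasis

variable {K M L ι : Type*} [Field K] [Field M] [Field L] [Algebra K M] [Algebra M L]
  [Algebra K L] [IsScalarTower K M L] [IsAlgClosed L]

theorem exists_algEquiv_aeval_eq {v : ι → L} (hv : IsTranscendenceBasis M v)
    (g : MvPolynomial ι M ≃ₐ[K] MvPolynomial ι M) :
    ∃ σ : L ≃ₐ[K] L, ∀ p, σ (aeval v p) = aeval v (g p) := by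
  let A := Algebra.adjoin M (Set.range v)
  have := IsAlgClosed.isAlgClosure_of_transcendence_basis v hv
  let e : A ≃+* A := (hv.1.aevalEquiv.symm.toRingEquiv.trans g.toRingEquiv).trans
    hv.1.aevalEquiv.toRingEquiv
  let σ : L ≃+* L := IsAlgClosure.equivOfEquiv L L e
  have hσ : ∀ p, σ (aeval v p) = aeval v (g p) := fun p => by
    rw [← hv.1.algebraMap_aevalEquiv, ← hv.1.algebraMap_aevalEquiv,
      IsAlgClosure.equivOfEquiv_algebraMap]
    simp [e]
  have hK : ∀ k : K, σ (algebraMap K L k) = algebraMap K L k := fun k => by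
    have hk : aeval v (algebraMap K (MvPolynomial ι M) k) = algebraMap K L k :=
      ((aeval v).restrictScalars K).commutes k
    simpa only [g.commutes, hk] using hσ (algebraMap K _ k)
  exact ⟨AlgEquiv.ofRingEquiv hK, hσ⟩

end IsTranscendenceBasis

namespace IsAlgClosed

theorem exists_algEquiv_extend {K M L : Type*} [Field K] [Field M] [Field L] [Algebra K M]
    [Algebra M L] [Algebra K L] [IsScalarTower K M L] [IsAlgClosed L] (τ : M ≃ₐ[K] M) :
    ∃ σ : L ≃ₐ[K] L, ∀ m, σ (algebraMap M L m) = algebraMap M L (τ m) := by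
  obtain ⟨ι, v, hv⟩ := exists_isTranscendenceBasis' M L
  obtain ⟨σ, hσ⟩ := hv.exists_algEquiv_aeval_eq (mapAlgEquiv ι τ)
  refine ⟨σ, fun m => ?_⟩
  simpa using hσ (C m)

variable {K L : Type*} [Field K] [Field L] [Algebra K L] [IsAlgClosed L]

theorem exists_algEquiv_apply_ne_of_transcendental {x : L} (hx : Transcendental K x) :
    ∃ σ : L ≃ₐ[K] L, σ x ≠ x := by
  classical
  have hx' : AlgebraicIndependent K ((↑) : ({x} : Set L) → L) :=
    algebraicIndependent_unique_type_iff.mpr hx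
  obtain ⟨s, hxs, hs⟩ := exists_isTranscendenceBasis_superset hx'
  obtain ⟨σ, hσ⟩ := hs.exists_algEquiv_aeval_eq (translate (Pi.single ⟨x, hxs rfl⟩ 1))
  refine ⟨σ, fun h => ?_⟩
  have := hσ (X ⟨x, hxs rfl⟩)
  simp [h] at this

theorem exists_algEquiv_apply_ne_of_isAlgebraic [PerfectField K] {x : L} (hx : IsAlgebraic K x)
    (hxK : x ∉ (⊥ : Subalgebra K L)) : ∃ σ : L ≃ₐ[K] L, σ x ≠ x := by
  have hsep : IsSeparable K x :=
    PerfectField.separable_of_irreducible (minpoly.irreducible hx.isIntegral)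
  obtain ⟨y, hxy, hconj⟩ :=
    (notMem_iff_exists_ne_and_isConjRoot hsep (IsAlgClosed.splits _)).mp hxK
  let M := algebraicClosure K L
  let x' : M := ⟨x, mem_algebraicClosure_iff.mpr hx⟩
  let y' : M := ⟨y, mem_algebraicClosure_iff.mpr (hconj.isIntegral hx.isIntegral).isAlgebraic⟩
  have hconj' : IsConjRoot K y' x' :=
    ((isConjRoot_algHom_iff (x := x') (y := y') (IsScalarTower.toAlgHom K M L)).mp hconj).symm
  obtain ⟨τ, hτ⟩ := hconj'.exists_algEquiv
  obtain ⟨σ, hσ⟩ := exists_algEquiv_extend (L := L) τ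
  refine ⟨σ, fun h => hxy ?_⟩
  have := hσ x'
  rw [hτ] at this
  exact h.symm.trans this

theorem fixedField_top_eq_bot [PerfectField K] :
    IntermediateField.fixedField (⊤ : Subgroup (L ≃ₐ[K] L)) = ⊥ := by
  refine eq_bot_iff.mpr fun x hx => ?_
  rw [IntermediateField.mem_fixedField_iff] at hx
  by_contra hxK
  obtain ⟨σ, hσ⟩ : ∃ σ : L ≃ₐ[K] L, σ x ≠ x := by
    by_cases halg : IsAlgebraic K x
    · exact exists_algEquiv_apply_ne_of_isAlgebraic halg hxK
    · exact exists_algEquiv_apply_ne_of_transcendental halg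
  exact hσ (hx σ trivial)

end IsAlgClosed

namespace Algebra.TensorProduct

variable {K L W ι : Type*} [Field K] [Field L] [Algebra K L] [AddCommGroup W] [Module K W]

theorem basis_repr_rTensor (b : Module.Basis ι K W) (σ : L →ₐ[K] L) (u : L ⊗[K] W)
    (i : ι) :
    (basis L b).repr (LinearMap.rTensor W σ.toLinearMap u) i = σ ((basis L b).repr u i) := by
  induction u using TensorProduct.induction_on with
  | zero => simp
  | tmul a w => simp [basis_repr_tmul]
  | add u₁ u₂ h₁ h₂ => simp only [map_add, Finsupp.add_apply, h₁, h₂]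

end Algebra.TensorProduct

section Descent

variable {K L V W : Type*} [Field K] [Field L] [Algebra K L]
  [AddCommGroup V] [Module K V] [AddCommGroup W] [Module K W]

theorem mem_range_mk_one_of_forall_rTensor_eq
    (hK : IntermediateField.fixedField (⊤ : Subgroup (L ≃ₐ[K] L)) = ⊥) {u : L ⊗[K] W}
    (hu : ∀ σ : L ≃ₐ[K] L, LinearMap.rTensor W σ.toLinearMap u = u) :
    u ∈ LinearMap.range (TensorProduct.mk K L W 1) := by
  let b := Module.Basis.ofVectorSpace K W
  let B := Algebra.TensorProduct.basis L b
  have hcoord : ∀ i, ∃ k : K, algebraMap K L k = B.repr u i := fun i => by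
    have : B.repr u i ∈ IntermediateField.fixedField (⊤ : Subgroup (L ≃ₐ[K] L)) :=
      (IntermediateField.mem_fixedField_iff _ _).mpr fun σ _ => by
        simpa [hu] using (Algebra.TensorProduct.basis_repr_rTensor b σ.toAlgHom u i).symm
    rw [hK] at this
    exact IntermediateField.mem_bot.mp this
  rw [← B.linearCombination_repr u, Finsupp.linearCombination_apply]
  refine Submodule.sum_mem _ fun i _ => ?_
  obtain ⟨k, hk⟩ := hcoord i
  exact ⟨k • b i, by simp [B, ← hk, algebraMap_smul]⟩

theorem LinearMap.exists_unique_eq_baseChange_of_commute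
    (hK : IntermediateField.fixedField (⊤ : Subgroup (L ≃ₐ[K] L)) = ⊥)
    (F : L ⊗[K] V →ₗ[L] L ⊗[K] W)
    (hF : ∀ σ : L ≃ₐ[K] L,
      (LinearMap.rTensor W (σ.toLinearMap : L →ₗ[K] L)).comp (F.restrictScalars K)
        = (F.restrictScalars K).comp (LinearMap.rTensor V (σ.toLinearMap : L →ₗ[K] L))) :
    ∃! f : V →ₗ[K] W, F = f.baseChange L := by
  have hfix : ∀ v, F (1 ⊗ₜ v) ∈ LinearMap.range (TensorProduct.mk K L W 1) := fun v =>
    mem_range_mk_one_of_forall_rTensor_eq hK fun σ => by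
      simpa using LinearMap.congr_fun (hF σ) (1 ⊗ₜ v)
  let e := LinearEquiv.ofInjective _ (Module.Flat.tensorProduct_mk_injective K W L)
  let f : V →ₗ[K] W :=
    e.symm ∘ₗ ((F.restrictScalars K ∘ₗ TensorProduct.mk K L V 1).codRestrict _ hfix)
  have hFf : F = f.baseChange L := by
    ext v
    have : TensorProduct.mk K L W 1 (f v) = F (1 ⊗ₜ v) :=
      congrArg Subtype.val (e.apply_symm_apply ⟨F (1 ⊗ₜ v), hfix v⟩)
    simpa using this.symm
  exact ⟨f, hFf, fun g hg => LinearMap.baseChangeHom_injective K V L (hg.symm.trans hFf)⟩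

end Descent

/-- Descent for linear maps: an `L`-linear map `F : V ⊗_K L → W ⊗_K L` commuting with the
semilinear actions of `Aut_K(L)` (given by `σ ⊗ id`) descends uniquely to a `K`-linear map
`f : V → W` with `F = f ⊗_K id_L`. -/
theorem stmt1 (K L V W : Type*) [Field K] [Field L] [CharZero K] [IsAlgClosed L]
    [Algebra K L] [AddCommGroup V] [Module K V] [AddCommGroup W] [Module K W]
    (F : L ⊗[K] V →ₗ[L] L ⊗[K] W)
    (hF : ∀ σ : L ≃ₐ[K] L,
      (LinearMap.rTensor W (σ.toLinearMap : L →ₗ[K] L)).comp (F.restrictScalars K)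
        = (F.restrictScalars K).comp (LinearMap.rTensor V (σ.toLinearMap : L →ₗ[K] L))) :
    ∃! f : V →ₗ[K] W, F = LinearMap.baseChange L f :=
  LinearMap.exists_unique_eq_baseChange_of_commute IsAlgClosed.fixedField_top_eq_bot F hF
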